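/- Fix a distinguished index 0 ∈ ι and assume that for all i, j ∈ ι and all natural numbers m ≥ 0 the commutator [V_i, V_j] = V_i∘V_j − V_j∘V_i maps I^m(f,V) into I^m(f,V). For each n ≥ 0 let J^{(n)} denote the ideal of A generated by all elements V_{i_1}(⋯ V_{i_m}(V_0^j(f_α))⋯) with m ≥ 0 arbitrary, indices i_1,…,i_m ∈ ι∖{0}, 0 ≤ j ≤ n, and α ∈ 𝒜, where V_0^j is the j-th iterate of V_0. Then I^n(f,V) ⊆ J^{(n)} for every n ≥ 0. -/

import Mathlib

/-- The ideal `I^n(f,V)` of the commutative ring `A` generated by all elements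
`V_{i_1}(V_{i_2}(⋯ V_{i_k}(f_α)⋯))` with `0 ≤ k ≤ n`. -/
def iterIdeal {A : Type*} [CommRing A] {𝒜 ι : Type*} (f : 𝒜 → A) (V : ι → A → A)
    (n : ℕ) : Ideal A :=
  Ideal.span {x | ∃ l : List ι, l.length ≤ n ∧ ∃ α : 𝒜, x = l.foldr V (f α)}

section Aux

variable {A : Type*} [CommRing A] {𝒜 ι : Type*} (f : 𝒜 → A) (V : ι → A → A)

lemma iterIdeal_mono {m n : ℕ} (h : m ≤ n) : iterIdeal f V m ≤ iterIdeal f V n :=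
  Ideal.span_mono (fun _x ⟨l, hl, α, hx⟩ => ⟨l, hl.trans h, α, hx⟩)

lemma derivV_zero (hadd : ∀ i : ι, ∀ x y : A, V i (x + y) = V i x + V i y) (i : ι) :
    V i 0 = 0 := by
  have h := hadd i 0 0
  rw [add_zero] at h
  exact (left_eq_add.mp h)

lemma deriv_iterIdeal
    (hadd : ∀ i : ι, ∀ x y : A, V i (x + y) = V i x + V i y)
    (hmul : ∀ i : ι, ∀ x y : A, V i (x * y) = V i x * y + x * V i y)
    (i : ι) (m : ℕ) {x : A} (hx : x ∈ iterIdeal f V m) :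
    V i x ∈ iterIdeal f V (m + 1) := by
  induction hx using Submodule.span_induction with
  | mem x h =>
      obtain ⟨l, hl, α, rfl⟩ := h
      refine Ideal.subset_span ⟨i :: l, ?_, α, rfl⟩
      simp only [List.length_cons]
      exact Nat.succ_le_succ hl
  | zero => rw [derivV_zero V hadd i]; exact zero_mem _
  | add x y hx hy ihx ihy => rw [hadd]; exact add_mem ihx ihy
  | smul a x hx ih =>
      rw [smul_eq_mul, hmul]
      refine add_mem ?_ (Ideal.mul_mem_left _ _ ih)
      exact Ideal.mul_mem_left _ _ (iterIdeal_mono f V (Nat.le_succ m) hx)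

lemma foldr_iterIdeal
    (hadd : ∀ i : ι, ∀ x y : A, V i (x + y) = V i x + V i y)
    (hmul : ∀ i : ι, ∀ x y : A, V i (x * y) = V i x * y + x * V i y)
    (l : List ι) (m : ℕ) {x : A} (hx : x ∈ iterIdeal f V m) :
    l.foldr V x ∈ iterIdeal f V (m + l.length) := by
  induction l with
  | nil => simpa using hx
  | cons i l ih =>
      have h2 := deriv_iterIdeal f V hadd hmul i (m + l.length) ih
      simp only [List.foldr_cons, List.length_cons, ← Nat.add_assoc]
      exact h2

lemma foldr_add (hadd : ∀ i : ι, ∀ x y : A, V i (x + y) = V i x + V i y)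
    (l : List ι) (x y : A) :
    l.foldr V (x + y) = l.foldr V x + l.foldr V y := by
  induction l with
  | nil => rfl
  | cons i l ih => simp [List.foldr_cons, ih, hadd]

omit [CommRing A] in
lemma foldr_replicate (i₀ : ι) (j : ℕ) (x : A) :
    (List.replicate j i₀).foldr V x = (V i₀)^[j] x := by
  induction j with
  | zero => rfl
  | succ j ih => simp [List.replicate_succ, ih, Function.iterate_succ_apply']

end Aux

section Mu

variable {ι : Type*} (i₀ : ι)

open Classical in
/-- number of entries different from `i₀`. -/
noncomputable def muCne : List ι → ℕ
  | [] => 0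
  | i :: l => (if i = i₀ then 0 else 1) + muCne l

open Classical in
/-- number of entries equal to `i₀`. -/
noncomputable def muCz : List ι → ℕ
  | [] => 0
  | i :: l => (if i = i₀ then 1 else 0) + muCz l

open Classical in
/-- number of inversions: pairs `p < q` with `l[p] = i₀`, `l[q] ≠ i₀`. -/
noncomputable def mu : List ι → ℕ
  | [] => 0
  | i :: l => (if i = i₀ then muCne i₀ l else 0) + mu l

lemma muCne_append (a b : List ι) : muCne i₀ (a ++ b) = muCne i₀ a + muCne i₀ b := by
  induction a with
  | nil => simp [muCne]
  | cons i a ih =>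
      simp only [List.cons_append, muCne, ih]
      by_cases h : i = i₀ <;> simp [h] <;> omega

lemma mu_append (a b : List ι) :
    mu i₀ (a ++ b) = mu i₀ a + muCz i₀ a * muCne i₀ b + mu i₀ b := by
  induction a with
  | nil => simp [mu, muCz]
  | cons i a ih =>
      by_cases h : i = i₀
      · simp only [List.cons_append, mu, muCz, if_pos h, List.append_eq, muCne_append, ih]
        ring
      · simp only [List.cons_append, mu, muCz, if_neg h, List.append_eq, muCne_append, ih]
        ring

lemma muCne_eq_zero {l : List ι} (h : muCne i₀ l = 0) : l = List.replicate l.length i₀ := by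
  induction l with
  | nil => rfl
  | cons i l ih =>
      rw [muCne] at h
      by_cases hi : i = i₀
      · rw [if_pos hi] at h
        rw [List.length_cons, List.replicate_succ, hi]
        exact congrArg _ (ih (by omega))
      · rw [if_neg hi] at h
        omega

lemma muCne_replicate (j : ℕ) : muCne i₀ (List.replicate j i₀) = 0 := by
  induction j with
  | zero => rfl
  | succ j ih => simp [List.replicate_succ, muCne, ih]

lemma mu_eq_zero {l : List ι} (h : mu i₀ l = 0) :
    ∃ a j, (∀ i ∈ a, i ≠ i₀) ∧ l = a ++ List.replicate j i₀ := by
  induction l with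
  | nil => exact ⟨[], 0, by simp, rfl⟩
  | cons i l ih =>
      rw [mu] at h
      have h2 : mu i₀ l = 0 := by omega
      by_cases hi : i = i₀
      · have h1 : muCne i₀ l = 0 := by
          rw [if_pos hi] at h; omega
        refine ⟨[], l.length + 1, by simp, ?_⟩
        rw [List.nil_append, List.replicate_succ, hi]
        exact congrArg _ (muCne_eq_zero i₀ h1)
      · obtain ⟨a, j, ha, rfl⟩ := ih h2
        exact ⟨i :: a, j, by simpa [hi] using ha, rfl⟩

lemma mu_pos {l : List ι} (h : mu i₀ l ≠ 0) :
    ∃ a i b, i ≠ i₀ ∧ l = a ++ i₀ :: i :: b := by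
  induction l with
  | nil => simp [mu] at h
  | cons c l ih =>
      by_cases h2 : mu i₀ l = 0
      · have hc : c = i₀ ∧ muCne i₀ l ≠ 0 := by
          by_cases hc : c = i₀
          · refine ⟨hc, ?_⟩
            intro hcne
            rw [mu, hcne, h2, hc] at h
            simp at h
          · rw [mu, h2] at h; simp [hc] at h
        obtain ⟨a, j, ha, rfl⟩ := mu_eq_zero i₀ h2
        match a, ha with
        | [], _ =>
            exact absurd (muCne_replicate i₀ j) (by simpa using hc.2)
        | i :: a, ha =>
            exact ⟨[], i, a ++ List.replicate j i₀, ha i (by simp), by simp [hc.1]⟩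
      · obtain ⟨a, i, b, hi, rfl⟩ := ih h2
        exact ⟨c :: a, i, b, hi, rfl⟩

lemma mu_swap {i : ι} (hi : i ≠ i₀) (a b : List ι) :
    mu i₀ (a ++ i :: i₀ :: b) < mu i₀ (a ++ i₀ :: i :: b) := by
  have e1 : muCne i₀ (i :: i₀ :: b) = muCne i₀ (i₀ :: i :: b) := by
    simp [muCne, hi]
  have e2 : mu i₀ (i :: i₀ :: b) < mu i₀ (i₀ :: i :: b) := by
    simp [mu, muCne, hi]
  rw [mu_append, mu_append, e1]
  omega

end Mu

/-- Fix a distinguished index `i₀`. If the commutators `[V_i, V_j]` of the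
derivations `V` map each `I^m(f,V)` into itself, then `I^n(f,V)` is contained in the
ideal `J^{(n)}` generated by all `V_{i_1}(⋯ V_{i_m}(V_{i₀}^j(f_α))⋯)` with
`m ≥ 0` arbitrary, indices `i_1,…,i_m ≠ i₀`, and `0 ≤ j ≤ n`. -/
theorem iterIdeal_le_adapted {A : Type*} [CommRing A] {𝒜 ι : Type*}
    (f : 𝒜 → A) (V : ι → A → A) (i₀ : ι)
    (hadd : ∀ i : ι, ∀ x y : A, V i (x + y) = V i x + V i y)
    (hmul : ∀ i : ι, ∀ x y : A, V i (x * y) = V i x * y + x * V i y)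
    (hcomm : ∀ i j : ι, ∀ m : ℕ, ∀ x ∈ iterIdeal f V m,
      V i (V j x) - V j (V i x) ∈ iterIdeal f V m)
    (n : ℕ) :
    iterIdeal f V n ≤
      Ideal.span {x | ∃ l : List ι, (∀ i ∈ l, i ≠ i₀) ∧
        ∃ j ≤ n, ∃ α : 𝒜, x = l.foldr V ((V i₀)^[j] (f α))} := by
  set J : ℕ → Ideal A := fun n => Ideal.span {x | ∃ l : List ι, (∀ i ∈ l, i ≠ i₀) ∧
        ∃ j ≤ n, ∃ α : 𝒜, x = l.foldr V ((V i₀)^[j] (f α))} with hJ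
  show iterIdeal f V n ≤ J n
  clear hJ
  have Jmono : ∀ {m n : ℕ}, m ≤ n → J m ≤ J n := by
    intro m n h
    exact Ideal.span_mono (fun _x ⟨l, hl, j, hj, α, hx⟩ => ⟨l, hl, j, hj.trans h, α, hx⟩)
  induction n using Nat.strong_induction_on with
  | _ n IH =>
  rw [iterIdeal, Ideal.span_le]
  rintro x ⟨l, hl, α, rfl⟩
  -- the base case: no inversions
  have base : ∀ l : List ι, ∀ α : 𝒜, mu i₀ l = 0 → l.length ≤ n →
      List.foldr V (f α) l ∈ J n := by
    intro l α hmu hl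
    obtain ⟨a, j, ha, rfl⟩ := mu_eq_zero i₀ hmu
    rw [List.foldr_append, foldr_replicate]
    refine Ideal.subset_span ⟨a, ha, j, ?_, α, rfl⟩
    simp only [List.length_append, List.length_replicate] at hl
    omega
  -- induction on the number of inversions of l
  have H : ∀ N : ℕ, ∀ l : List ι, ∀ α : 𝒜, mu i₀ l ≤ N → l.length ≤ n →
      List.foldr V (f α) l ∈ J n := by
    intro N
    induction N with
    | zero => intro l α hmu hl; exact base l α (Nat.le_zero.mp hmu) hl
    | succ N IHmu =>
      intro l α hmu hl
      by_cases hN : mu i₀ l = 0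
      · exact base l α hN hl
      · obtain ⟨a, i, b, hi, rfl⟩ := mu_pos i₀ hN
        have key : (a ++ i₀ :: i :: b).foldr V (f α)
            = (a ++ i :: i₀ :: b).foldr V (f α)
              + a.foldr V
                  (V i₀ (V i (b.foldr V (f α))) - V i (V i₀ (b.foldr V (f α)))) := by
          rw [List.foldr_append, List.foldr_append]
          simp only [List.foldr_cons]
          rw [← foldr_add V hadd]
          congr 1
          ring
        rw [key]
        have hlen : a.length + b.length + 2 ≤ n := by
          simp only [List.length_append, List.length_cons] at hl
          omega
        refine add_mem ?_ ?_
        · -- swapped list: strictly smaller mu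
          refine IHmu (a ++ i :: i₀ :: b) α ?_ ?_
          · have := mu_swap i₀ hi a b
            omega
          · simp only [List.length_append, List.length_cons]
            omega
        · -- commutator term lands in a lower iterIdeal
          have hb : b.foldr V (f α) ∈ iterIdeal f V b.length :=
            Ideal.subset_span ⟨b, le_refl _, α, rfl⟩
          have hc := hcomm i₀ i b.length _ hb
          have hfold := foldr_iterIdeal f V hadd hmul a b.length hc
          have hm : b.length + a.length < n := by omega
          exact Jmono (Nat.le_of_lt hm) (IH _ hm hfold)
  exact H (mu i₀ l) l α le_rfl hl
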